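/- In any equilibrium of the discrete single-period Kyle game, the insider's demand is monotone in the observed true value: if ξ(vⁱ, {x}) > 0 and vⁱ < vʲ, then ξ(vʲ, E_X ∩ [x, ∞)) = 1; and if ξ(vⁱ, {x}) > 0 and vⁱ > vʲ, then ξ(vʲ, E_X ∩ (−∞, x]) = 1. -/

import Mathlib

/-!
Revealed preference: if `x` is optimal at value `v` and `x'` at value `v'`, adding the two
optimality inequalities cancels the (arbitrary) average prices and leaves
`(v' - v) * (x' - x) ≥ 0`. So a higher value never puts weight strictly below an order
played with positive probability at a lower value, and the weight of the remaining orders is 1.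
-/

open Finset

/-- Average execution price `∫ S(x+z) ζ(dz)` for an insider order of size `x`. -/
noncomputable def avgPrice (EZ : Finset ℝ) (ζ : ℝ → ℝ) (S : ℝ → ℝ) (x : ℝ) : ℝ :=
  ∑ z ∈ EZ, ζ z * S (x + z)

/-- The insider's expected gain from order `x` when the true value is `v`. -/
noncomputable def gain (EZ : Finset ℝ) (ζ : ℝ → ℝ) (S : ℝ → ℝ) (v x : ℝ) : ℝ :=
  x * (v - avgPrice EZ ζ S x)

/-- Probability that the total demand equals `y`. -/
noncomputable def pY (EV EX EZ : Finset ℝ) (ν ζ : ℝ → ℝ) (ξ : ℝ → ℝ → ℝ) (y : ℝ) : ℝ :=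
  ∑ v ∈ EV, ∑ x ∈ EX, ∑ z ∈ EZ, if x + z = y then ν v * ξ v x * ζ z else 0

/-- Joint expectation of the true value on the event that total demand is `y`. -/
noncomputable def pYV (EV EX EZ : Finset ℝ) (ν ζ : ℝ → ℝ) (ξ : ℝ → ℝ → ℝ) (y : ℝ) : ℝ :=
  ∑ v ∈ EV, ∑ x ∈ EX, ∑ z ∈ EZ, if x + z = y then ν v * ξ v x * ζ z * v else 0

/-- `ξ` is a behaviour strategy: `ξ(v,·)` is a probability vector on `E_X`. -/
def IsStrategy (EV EX : Finset ℝ) (ξ : ℝ → ℝ → ℝ) : Prop :=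
  ∀ v ∈ EV, (∀ x ∈ EX, 0 ≤ ξ v x) ∧ ∑ x ∈ EX, ξ v x = 1

/-- Kyle equilibrium of the single-period discrete game: `ξ(v,·)` is supported on
maximisers of the gain given `S`, and `S` satisfies rational pricing given `ξ`
at every total demand with positive probability. -/
def IsKyleEquilibrium (EV EX EZ : Finset ℝ) (ν ζ : ℝ → ℝ)
    (ξ : ℝ → ℝ → ℝ) (S : ℝ → ℝ) : Prop :=
  IsStrategy EV EX ξ ∧
  (∀ v ∈ EV, ∀ x ∈ EX, 0 < ξ v x → ∀ x' ∈ EX, gain EZ ζ S v x' ≤ gain EZ ζ S v x) ∧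
  (∀ y : ℝ, 0 < pY EV EX EZ ν ζ ξ y →
    S y * pY EV EX EZ ν ζ ξ y = pYV EV EX EZ ν ζ ξ y)

theorem le_of_revealed_preference {p : ℝ → ℝ} {v v' x x' : ℝ}
    (hx : x' * (v - p x') ≤ x * (v - p x)) (hx' : x * (v' - p x) ≤ x' * (v' - p x'))
    (hv : v < v') : x ≤ x' := by
  by_contra! h
  nlinarith

theorem IsStrategy.sum_filter_eq_one {EV EX : Finset ℝ} {ξ : ℝ → ℝ → ℝ}
    (hξ : IsStrategy EV EX ξ) {v : ℝ} (hv : v ∈ EV) {q : ℝ → Prop} [DecidablePred q]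
    (hq : ∀ x ∈ EX, 0 < ξ v x → q x) : ∑ x ∈ EX with q x, ξ v x = 1 := by
  obtain ⟨hnonneg, hsum⟩ := hξ v hv
  rw [sum_filter_of_ne fun x hx hne => hq x hx ((hnonneg x hx).lt_of_ne' hne), hsum]

theorem IsKyleEquilibrium.le_of_pos_of_lt {EV EX EZ : Finset ℝ} {ν ζ : ℝ → ℝ}
    {ξ : ℝ → ℝ → ℝ} {S : ℝ → ℝ} (heq : IsKyleEquilibrium EV EX EZ ν ζ ξ S)
    {v v' x x' : ℝ} (hv : v ∈ EV) (hv' : v' ∈ EV) (hx : x ∈ EX) (hx' : x' ∈ EX)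
    (hξ : 0 < ξ v x) (hξ' : 0 < ξ v' x') (hlt : v < v') : x ≤ x' :=
  le_of_revealed_preference (heq.2.1 v hv x hx hξ x' hx') (heq.2.1 v' hv' x' hx' hξ' x hx) hlt

theorem insider_demand_monotone
    (EV EX EZ : Finset ℝ)
    (ν ζ : ℝ → ℝ)
    (ξ : ℝ → ℝ → ℝ) (S : ℝ → ℝ)
    (heq : IsKyleEquilibrium EV EX EZ ν ζ ξ S) :
    (∀ vi ∈ EV, ∀ vj ∈ EV, ∀ x ∈ EX, 0 < ξ vi x → vi < vj →
      ∑ x' ∈ EX.filter (fun x' => x ≤ x'), ξ vj x' = 1) ∧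
    (∀ vi ∈ EV, ∀ vj ∈ EV, ∀ x ∈ EX, 0 < ξ vi x → vj < vi →
      ∑ x' ∈ EX.filter (fun x' => x' ≤ x), ξ vj x' = 1) := by
  constructor
  · intro vi hvi vj hvj x hx hξi hlt
    exact heq.1.sum_filter_eq_one hvj fun x' hx' hξj =>
      heq.le_of_pos_of_lt hvi hvj hx hx' hξi hξj hlt
  · intro vi hvi vj hvj x hx hξi hlt
    exact heq.1.sum_filter_eq_one hvj fun x' hx' hξj =>
      heq.le_of_pos_of_lt hvj hvi hx' hx hξj hξi hlt
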